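/- arXiv:2003.00979 — 2 statements merged into one kernel-verified Lean document; each statement's English description precedes it below -/
import Mathlib

section
/- Let $A=(a_j^i)$ be an $N\times n$ real matrix with columns $w_1,\dots,w_n$, let $1\le q<\infty$ and $0<\varepsilon<1$, and assume $|a_j^i|\le \varepsilon\,\|w_j\|_{\ell_q^N}$ for every $i\in\{1,\dots,N\}$ and $j\in\{1,\dots,n\}$. Then there exists a partition $\{1,\dots,N\}=\Omega_1\cup\Omega_2$, $\Omega_1\cap\Omega_2=\emptyset$, such that for $k=1,2$, $\|A(\Omega_k)\|_{(1,q)}\le \left(\tfrac12+\tfrac32\,\varepsilon^{q/3}\,\ln^{1/3}(4n)\right)^{1/q}\|A\|_{(1,q)}$. -/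
/-- The `(1,q)`-norm of the submatrix of the `N × n` real matrix `A` formed by the rows
with indices in `Ω`: `sup { (∑_{i ∈ Ω} |(Ax)ᵢ|^q)^(1/q) : ‖x‖_{ℓ₁ⁿ} ≤ 1 }`. -/
noncomputable def norm1q {N n : ℕ} (A : Matrix (Fin N) (Fin n) ℝ) (Ω : Finset (Fin N))
    (q : ℝ) : ℝ :=
  sSup {r : ℝ | ∃ x : Fin n → ℝ, (∑ j, |x j|) ≤ 1 ∧
    r = (∑ i ∈ Ω, |∑ j, A i j * x j| ^ q) ^ (1 / q)}

open Finset

lemma exp_add_exp_neg_le (x : ℝ) : Real.exp x + Real.exp (-x) ≤ 2 * Real.exp (x ^ 2 / 2) := by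
  have h := Real.cosh_le_exp_half_sq x
  rw [Real.cosh_eq] at h
  linarith

lemma mgf_id {N : ℕ} (f : Fin N → ℝ) :
    ∑ σ : Fin N → Bool, Real.exp (∑ i, if σ i then f i else -f i)
      = ∏ i, (Real.exp (f i) + Real.exp (-f i)) := by
  have h1 : ∀ σ : Fin N → Bool, Real.exp (∑ i, if σ i then f i else -f i)
      = ∏ i, (if σ i then Real.exp (f i) else Real.exp (-f i)) := by
    intro σ
    rw [Real.exp_sum]
    exact Finset.prod_congr rfl fun i _ => by by_cases h : σ i <;> simp [h]
  simp_rw [h1]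
  rw [show (∏ i, (Real.exp (f i) + Real.exp (-f i)))
      = ∏ i, ∑ b : Bool, (if b then Real.exp (f i) else Real.exp (-f i)) by
    exact Finset.prod_congr rfl fun i _ => by simp]
  rw [Fintype.prod_sum]

lemma chernoff_count {N : ℕ} (f : Fin N → ℝ) (lam t : ℝ) (hlam : 0 ≤ lam) :
    ((Finset.univ.filter (fun σ : Fin N → Bool =>
        t < |∑ i, if σ i then f i else -f i|)).card : ℝ)
      ≤ 2 * 2 ^ N * Real.exp (lam ^ 2 * (∑ i, f i ^ 2) / 2 - lam * t) := by
  set S : (Fin N → Bool) → ℝ := fun σ => ∑ i, if σ i then f i else -f i with hS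
  set bad := Finset.univ.filter (fun σ : Fin N → Bool => t < |S σ|) with hbad
  have key : ∀ σ ∈ bad, Real.exp (lam * t)
      ≤ Real.exp (lam * S σ) + Real.exp (-(lam * S σ)) := by
    intro σ hσ
    rw [hbad, Finset.mem_filter] at hσ
    have ht : lam * t ≤ lam * |S σ| := mul_le_mul_of_nonneg_left hσ.2.le hlam
    rcases abs_cases (S σ) with ⟨h, _⟩ | ⟨h, _⟩
    · calc Real.exp (lam * t) ≤ Real.exp (lam * S σ) := by
            apply Real.exp_le_exp.2; rw [h] at ht; exact ht
        _ ≤ _ := le_add_of_nonneg_right (Real.exp_pos _).le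
    · calc Real.exp (lam * t) ≤ Real.exp (-(lam * S σ)) := by
            apply Real.exp_le_exp.2; rw [h] at ht; linarith
        _ ≤ _ := le_add_of_nonneg_left (Real.exp_pos _).le
  have step1 : (bad.card : ℝ) * Real.exp (lam * t)
      ≤ ∑ σ : Fin N → Bool, (Real.exp (lam * S σ) + Real.exp (-(lam * S σ))) := by
    calc (bad.card : ℝ) * Real.exp (lam * t)
        = ∑ _σ ∈ bad, Real.exp (lam * t) := by rw [Finset.sum_const, nsmul_eq_mul]
      _ ≤ ∑ σ ∈ bad, (Real.exp (lam * S σ) + Real.exp (-(lam * S σ))) :=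
          Finset.sum_le_sum key
      _ ≤ ∑ σ : Fin N → Bool, (Real.exp (lam * S σ) + Real.exp (-(lam * S σ))) :=
          Finset.sum_le_sum_of_subset_of_nonneg (Finset.subset_univ _)
            (fun σ _ _ => by positivity)
  have hmul : ∀ (μ : ℝ) (σ : Fin N → Bool),
      μ * S σ = ∑ i, if σ i then μ * f i else -(μ * f i) := by
    intro μ σ
    rw [hS, Finset.mul_sum]
    exact Finset.sum_congr rfl fun i _ => by by_cases h : σ i <;> simp [h]
  have step2 : ∑ σ : Fin N → Bool, (Real.exp (lam * S σ) + Real.exp (-(lam * S σ)))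
      = 2 * ∏ i, (Real.exp (lam * f i) + Real.exp (-(lam * f i))) := by
    rw [Finset.sum_add_distrib]
    have e1 : ∑ σ : Fin N → Bool, Real.exp (lam * S σ)
        = ∏ i, (Real.exp (lam * f i) + Real.exp (-(lam * f i))) := by
      simp_rw [hmul lam]
      exact mgf_id (fun i => lam * f i)
    have e2 : ∑ σ : Fin N → Bool, Real.exp (-(lam * S σ))
        = ∏ i, (Real.exp (lam * f i) + Real.exp (-(lam * f i))) := by
      have : ∀ σ : Fin N → Bool, -(lam * S σ)
          = ∑ i, if σ i then (-lam) * f i else -((-lam) * f i) := by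
        intro σ; rw [← hmul (-lam) σ]; ring
      simp_rw [this]
      rw [mgf_id (fun i => (-lam) * f i)]
      exact Finset.prod_congr rfl fun i _ => by rw [neg_mul, neg_neg, add_comm]
    rw [e1, e2]; ring
  have step3 : ∏ i, (Real.exp (lam * f i) + Real.exp (-(lam * f i)))
      ≤ (2 : ℝ) ^ N * Real.exp (lam ^ 2 * (∑ i, f i ^ 2) / 2) := by
    calc ∏ i, (Real.exp (lam * f i) + Real.exp (-(lam * f i)))
        ≤ ∏ i, 2 * Real.exp ((lam * f i) ^ 2 / 2) :=
          Finset.prod_le_prod (fun i _ => by positivity)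
            (fun i _ => exp_add_exp_neg_le (lam * f i))
      _ = (2 : ℝ) ^ N * Real.exp (∑ i, (lam * f i) ^ 2 / 2) := by
          rw [Finset.prod_mul_distrib, Finset.prod_const, Real.exp_sum, Finset.card_univ,
            Fintype.card_fin]
      _ = (2 : ℝ) ^ N * Real.exp (lam ^ 2 * (∑ i, f i ^ 2) / 2) := by
          have hsum : ∑ i, (lam * f i) ^ 2 / 2 = lam ^ 2 * (∑ i, f i ^ 2) / 2 := by
            rw [Finset.mul_sum, ← Finset.sum_div]
            congr 1
            exact Finset.sum_congr rfl fun i _ => by ring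
          rw [hsum]
  have hle : (bad.card : ℝ) * Real.exp (lam * t)
      ≤ 2 * 2 ^ N * Real.exp (lam ^ 2 * (∑ i, f i ^ 2) / 2) := by
    calc (bad.card : ℝ) * Real.exp (lam * t) ≤ _ := step1
      _ = 2 * ∏ i, (Real.exp (lam * f i) + Real.exp (-(lam * f i))) := step2
      _ ≤ 2 * ((2 : ℝ) ^ N * Real.exp (lam ^ 2 * (∑ i, f i ^ 2) / 2)) := by linarith [step3]
      _ = _ := by ring
  rw [Real.exp_sub, ← mul_div_assoc, le_div_iff₀ (Real.exp_pos _)]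
  exact hle


lemma lq_tri {N : ℕ} (Ω : Finset (Fin N)) {q : ℝ} (hq : 1 ≤ q) {ι : Type*} [DecidableEq ι]
    (s : Finset ι) (g : ι → Fin N → ℝ) :
    (∑ i ∈ Ω, |∑ j ∈ s, g j i| ^ q) ^ (1 / q)
      ≤ ∑ j ∈ s, (∑ i ∈ Ω, |g j i| ^ q) ^ (1 / q) := by
  have hq0 : q ≠ 0 := by positivity
  induction s using Finset.induction with
  | empty =>
    simp [Real.zero_rpow hq0, Real.zero_rpow (show q⁻¹ ≠ 0 by positivity)]
  | @insert a s hns ih =>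
    have h1 : ∀ i, ∑ j ∈ insert a s, g j i = g a i + ∑ j ∈ s, g j i := fun i =>
      Finset.sum_insert hns
    simp_rw [h1]
    rw [Finset.sum_insert hns]
    calc (∑ i ∈ Ω, |g a i + ∑ j ∈ s, g j i| ^ q) ^ (1 / q)
        ≤ (∑ i ∈ Ω, |g a i| ^ q) ^ (1 / q)
            + (∑ i ∈ Ω, |∑ j ∈ s, g j i| ^ q) ^ (1 / q) :=
          Real.Lp_add_le Ω _ _ hq
      _ ≤ (∑ i ∈ Ω, |g a i| ^ q) ^ (1 / q)
            + ∑ j ∈ s, (∑ i ∈ Ω, |g j i| ^ q) ^ (1 / q) := by linarith [ih]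

lemma norm1q_nonneg {N n : ℕ} (A : Matrix (Fin N) (Fin n) ℝ) (Ω : Finset (Fin N)) (q : ℝ) :
    0 ≤ norm1q A Ω q := by
  apply Real.sSup_nonneg
  rintro r ⟨x, hx, rfl⟩
  positivity

lemma norm1q_bddAbove {N n : ℕ} (A : Matrix (Fin N) (Fin n) ℝ) (Ω : Finset (Fin N)) {q : ℝ}
    (hq : 1 ≤ q) :
    BddAbove {r : ℝ | ∃ x : Fin n → ℝ, (∑ j, |x j|) ≤ 1 ∧
      r = (∑ i ∈ Ω, |∑ j, A i j * x j| ^ q) ^ (1 / q)} := by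
  refine ⟨(∑ i ∈ Ω, (∑ j, |A i j|) ^ q) ^ (1 / q), ?_⟩
  rintro r ⟨x, hx, rfl⟩
  apply Real.rpow_le_rpow (by positivity) _ (by positivity)
  apply Finset.sum_le_sum
  intro i _
  apply Real.rpow_le_rpow (abs_nonneg _) _ (by positivity)
  calc |∑ j, A i j * x j| ≤ ∑ j, |A i j * x j| := Finset.abs_sum_le_sum_abs _ _
    _ ≤ ∑ j, |A i j| := by
        apply Finset.sum_le_sum
        intro j _
        rw [abs_mul]
        have hxj : |x j| ≤ 1 := le_trans (Finset.single_le_sum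
          (f := fun j => |x j|) (fun j _ => abs_nonneg _) (Finset.mem_univ j)) hx
        calc |A i j| * |x j| ≤ |A i j| * 1 :=
              mul_le_mul_of_nonneg_left hxj (abs_nonneg _)
          _ = |A i j| := mul_one _

lemma col_le_norm1q {N n : ℕ} (A : Matrix (Fin N) (Fin n) ℝ) {q : ℝ} (hq : 1 ≤ q) (j : Fin n) :
    (∑ i, |A i j| ^ q) ^ (1 / q) ≤ norm1q A Finset.univ q := by
  apply le_csSup (norm1q_bddAbove A Finset.univ hq)
  refine ⟨fun j' => if j' = j then 1 else 0, ?_, ?_⟩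
  · have e : ∀ j' : Fin n, |if j' = j then (1:ℝ) else 0| = if j' = j then 1 else 0 :=
      fun j' => by split <;> simp
    simp [e]
  · congr 1
    refine Finset.sum_congr rfl fun i _ => ?_
    congr 1
    simp [mul_ite]

lemma norm1q_le {N n : ℕ} (A : Matrix (Fin N) (Fin n) ℝ) (Ω : Finset (Fin N)) {q : ℝ}
    (hq : 1 ≤ q) {D : ℝ} (hD : 0 ≤ D)
    (h : ∀ j, (∑ i ∈ Ω, |A i j| ^ q) ^ (1 / q) ≤ D) : norm1q A Ω q ≤ D := by
  have hq0 : q ≠ 0 := by positivity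
  apply Real.sSup_le _ hD
  rintro r ⟨x, hx, rfl⟩
  have h1 : ∀ i, ∑ j, A i j * x j = ∑ j, (fun j i => A i j * x j) j i := fun i => rfl
  calc (∑ i ∈ Ω, |∑ j, A i j * x j| ^ q) ^ (1 / q)
      ≤ ∑ j, (∑ i ∈ Ω, |A i j * x j| ^ q) ^ (1 / q) :=
        lq_tri Ω hq Finset.univ (fun j i => A i j * x j)
    _ = ∑ j, |x j| * (∑ i ∈ Ω, |A i j| ^ q) ^ (1 / q) := by
        refine Finset.sum_congr rfl fun j _ => ?_
        have e1 : ∀ i ∈ Ω, |A i j * x j| ^ q = |x j| ^ q * |A i j| ^ q := by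
          intro i _
          rw [abs_mul, mul_comm, Real.mul_rpow (abs_nonneg _) (abs_nonneg _)]
        rw [Finset.sum_congr rfl e1, ← Finset.mul_sum,
          Real.mul_rpow (by positivity) (by positivity), one_div,
          Real.rpow_rpow_inv (abs_nonneg _) hq0]
    _ ≤ ∑ j, |x j| * D := by
        apply Finset.sum_le_sum
        intro j _
        exact mul_le_mul_of_nonneg_left (h j) (abs_nonneg _)
    _ = (∑ j, |x j|) * D := (Finset.sum_mul _ _ _).symm
    _ ≤ 1 * D := mul_le_mul_of_nonneg_right hx hD
    _ = D := one_mul _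

lemma norm1q_mono {N n : ℕ} (A : Matrix (Fin N) (Fin n) ℝ) (Ω : Finset (Fin N)) {q : ℝ}
    (hq : 1 ≤ q) : norm1q A Ω q ≤ norm1q A Finset.univ q := by
  apply Real.sSup_le _ (norm1q_nonneg A Finset.univ q)
  rintro r ⟨x, hx, rfl⟩
  calc (∑ i ∈ Ω, |∑ j, A i j * x j| ^ q) ^ (1 / q)
      ≤ (∑ i, |∑ j, A i j * x j| ^ q) ^ (1 / q) := by
        apply Real.rpow_le_rpow (by positivity) _ (by positivity)
        apply Finset.sum_le_sum_of_subset_of_nonneg (Finset.subset_univ _)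
        intro i _ _
        positivity
    _ ≤ norm1q A Finset.univ q := le_csSup (norm1q_bddAbove A Finset.univ hq) ⟨x, hx, rfl⟩

lemma arith_e4 {u L : ℝ} (hu : 0 < u) (hL : 0 < L) (huL : u * L < 1 / 3) :
    2 * L ^ (3:ℕ) * u ^ (3:ℕ) ≤ 2 * (3 / 2 * u * L) ^ 2 := by
  nlinarith [mul_le_mul_of_nonneg_right huL.le
    (by positivity : (0:ℝ) ≤ u ^ 2 * L ^ 2), sq_nonneg (u * L), mul_pos hu hL]


set_option maxHeartbeats 1000000 in
/-- Let `A = (aⱼⁱ)` be an `N × n` real matrix with columns `w₁, …, w_n`, let `1 ≤ q < ∞` and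
`0 < ε < 1`, and assume `|aⱼⁱ| ≤ ε ‖wⱼ‖_{ℓ_q^N}` for every `i` and `j`. Then there exists a
partition `{1, …, N} = Ω₁ ∪ Ω₂`, `Ω₁ ∩ Ω₂ = ∅`, such that for `k = 1, 2`,
`‖A(Ω_k)‖_(1,q) ≤ (1/2 + (3/2) ε^(q/3) (ln 4n)^(1/3))^(1/q) ‖A‖_(1,q)`. -/
theorem statement3 (N n : ℕ) (A : Matrix (Fin N) (Fin n) ℝ) (q ε : ℝ)
    (hq : 1 ≤ q) (hε : 0 < ε) (hε' : ε < 1)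
    (hA : ∀ (i : Fin N) (j : Fin n), |A i j| ≤ ε * (∑ i', |A i' j| ^ q) ^ (1 / q)) :
    ∃ Ω₁ Ω₂ : Finset (Fin N), Ω₁ ∪ Ω₂ = Finset.univ ∧ Ω₁ ∩ Ω₂ = ∅ ∧
      ∀ Ω ∈ ({Ω₁, Ω₂} : Set (Finset (Fin N))),
        norm1q A Ω q ≤
          (1 / 2 + 3 / 2 * ε ^ (q / 3) * Real.log (4 * n) ^ ((1 : ℝ) / 3)) ^ (1 / q) *
            norm1q A Finset.univ q := by
  classical
  have hq0 : (0:ℝ) < q := lt_of_lt_of_le one_pos hq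
  have hqne : q ≠ 0 := ne_of_gt hq0
  set M := norm1q A Finset.univ q with hM
  have hM0 : 0 ≤ M := norm1q_nonneg A _ q
  set L := Real.log (4 * n) ^ ((1 : ℝ) / 3) with hLdef
  set c := 3 / 2 * ε ^ (q / 3) * L with hcdef
  have hlog0 : 0 ≤ Real.log (4 * n) := by
    rcases Nat.eq_zero_or_pos n with h | h
    · subst h; simp
    · apply Real.log_nonneg
      have : (1:ℝ) ≤ n := by exact_mod_cast h
      linarith
  have hL0 : 0 ≤ L := Real.rpow_nonneg hlog0 _
  have hc0 : 0 ≤ c := by positivity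
  set K := (1 / 2 + c) ^ (1 / q) with hKdef
  have hK0 : 0 ≤ K := Real.rpow_nonneg (by linarith) _
  by_cases htriv : 1 ≤ 1 / 2 + c
  · refine ⟨Finset.univ, ∅, by simp, by simp, ?_⟩
    intro Ω hΩ
    have hK1 : 1 ≤ K := Real.one_le_rpow htriv (by positivity)
    calc norm1q A Ω q ≤ M := norm1q_mono A Ω hq
      _ = 1 * M := (one_mul M).symm
      _ ≤ K * M := mul_le_mul_of_nonneg_right hK1 hM0
  · push_neg at htriv
    set b : Fin n → Fin N → ℝ := fun j i => |A i j| ^ q with hbdef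
    set T : Fin n → ℝ := fun j => ∑ i, b j i with hTdef
    have hb0 : ∀ j i, 0 ≤ b j i := fun j i => Real.rpow_nonneg (abs_nonneg _) _
    have hT0 : ∀ j, 0 ≤ T j := fun j => Finset.sum_nonneg fun i _ => hb0 j i
    set S : (Fin N → Bool) → Fin n → ℝ :=
      fun σ j => ∑ i, if σ i then b j i else -b j i with hSdef
    have key : ∃ σ : Fin N → Bool, ∀ j, |S σ j| ≤ 2 * c * T j := by
      by_contra hcon
      push_neg at hcon
      set bad : Fin n → Finset (Fin N → Bool) :=
        fun j => Finset.univ.filter (fun σ => 2 * c * T j < |S σ j|) with hbadd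
      have h2N : (0:ℝ) < 2 ^ N := by positivity
      have hcard : ∀ j, ((bad j).card : ℝ) ≤ (2:ℝ) ^ N / (8 * (n:ℝ) ^ 2) := by
        intro j
        have hn1 : 1 ≤ (n:ℝ) := by
          have : n ≠ 0 := by rintro rfl; exact j.elim0
          exact_mod_cast Nat.one_le_iff_ne_zero.2 this
        have hlog4 : Real.log 4 ≤ Real.log (4 * n) := by
          apply Real.log_le_log (by norm_num)
          nlinarith
        have hlogpos : 0 < Real.log (4 * n) :=
          lt_of_lt_of_le (Real.log_pos (by norm_num)) hlog4
        have hLpos : 0 < L := Real.rpow_pos_of_pos hlogpos _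
        set u := ε ^ (q / 3) with hudef
        have hu0 : 0 < u := Real.rpow_pos_of_pos hε _
        have huL : u * L < 1 / 3 := by
          have : 3 / 2 * u * L < 1 / 2 := by rw [hcdef] at htriv; linarith
          linarith
        have hεq : ε ^ q = u ^ (3:ℕ) := by
          rw [hudef, ← Real.rpow_natCast (ε ^ (q / 3)) 3, ← Real.rpow_mul hε.le]
          norm_num
        have hL3 : L ^ (3:ℕ) = Real.log (4 * n) := by
          rw [hLdef, ← Real.rpow_natCast (Real.log (4 * n) ^ ((1:ℝ)/3)) 3,
            ← Real.rpow_mul hlog0]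
          norm_num
        rcases eq_or_lt_of_le (hT0 j) with hTj | hTj
        · have hbz : ∀ i, b j i = 0 := by
            intro i
            have h0 := (Finset.sum_eq_zero_iff_of_nonneg (fun i _ => hb0 j i)).1 hTj.symm
            exact h0 i (Finset.mem_univ i)
          have hbe : bad j = ∅ := by
            rw [Finset.eq_empty_iff_forall_notMem]
            intro σ hσ
            rw [hbadd] at hσ
            simp only [Finset.mem_filter, Finset.mem_univ, true_and] at hσ
            have hS0 : S σ j = 0 := by
              rw [hSdef]
              simp [hbz]
            rw [hS0, ← hTj] at hσ
            simp at hσ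
          rw [hbe]
          simp only [Finset.card_empty, Nat.cast_zero]
          positivity
        · -- T j > 0 case
          have hεqpos : (0:ℝ) < ε ^ q := Real.rpow_pos_of_pos hε _
          set lam := 2 * c / (ε ^ q * T j) with hlamdef
          have hlam0 : 0 ≤ lam := by positivity
          have hbB : ∀ i, b j i ≤ ε ^ q * T j := by
            intro i
            have hTrfl : (∑ i', |A i' j| ^ q) = T j := rfl
            have h1 : |A i j| ^ q ≤ (ε * (T j) ^ (1/q)) ^ q := by
              apply Real.rpow_le_rpow (abs_nonneg _) _ hq0.le
              rw [← hTrfl]; exact hA i j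
            calc b j i = |A i j| ^ q := rfl
              _ ≤ (ε * (T j) ^ (1/q)) ^ q := h1
              _ = ε ^ q * T j := by
                  rw [Real.mul_rpow hε.le (Real.rpow_nonneg (hT0 j) _), one_div,
                    Real.rpow_inv_rpow (hT0 j) hqne]
          have hV : ∑ i, (b j i) ^ 2 ≤ ε ^ q * (T j) ^ 2 := by
            calc ∑ i, (b j i) ^ 2 ≤ ∑ i, (ε ^ q * T j) * b j i := by
                  apply Finset.sum_le_sum
                  intro i _
                  rw [sq]
                  exact mul_le_mul_of_nonneg_right (hbB i) (hb0 j i)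
              _ = (ε ^ q * T j) * T j := by rw [← Finset.mul_sum]
              _ = ε ^ q * (T j) ^ 2 := by ring
          have hexp : lam ^ 2 * (∑ i, (b j i) ^ 2) / 2 - lam * (2 * c * T j)
              ≤ -(2 * Real.log (4 * n)) := by
            have e1 : lam ^ 2 * (ε ^ q * (T j) ^ 2) / 2 = 2 * c ^ 2 / ε ^ q := by
              rw [hlamdef]; field_simp
            have e2 : lam * (2 * c * T j) = 4 * c ^ 2 / ε ^ q := by
              rw [hlamdef]; field_simp; ring
            have e3 : lam ^ 2 * (∑ i, (b j i) ^ 2) / 2 ≤ 2 * c ^ 2 / ε ^ q := by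
              rw [← e1]
              apply div_le_div_of_nonneg_right _ (by norm_num)
              exact mul_le_mul_of_nonneg_left hV (by positivity)
            have e4 : 2 * Real.log (4 * n) ≤ 2 * c ^ 2 / ε ^ q := by
              rw [← hL3, hεq, hcdef, le_div_iff₀ (by positivity : (0:ℝ) < u ^ (3:ℕ))]
              exact arith_e4 hu0 hLpos huL
            have h5 : lam ^ 2 * (∑ i, (b j i) ^ 2) / 2 - lam * (2 * c * T j)
                ≤ 2 * c ^ 2 / ε ^ q - 4 * c ^ 2 / ε ^ q := by
              rw [e2]
              exact sub_le_sub_right e3 _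
            refine le_trans h5 ?_
            have h6 : 2 * c ^ 2 / ε ^ q - 4 * c ^ 2 / ε ^ q = -(2 * c ^ 2 / ε ^ q) := by
              ring
            rw [h6]
            exact neg_le_neg e4
          have hcc := chernoff_count (b j) lam (2 * c * T j) hlam0
          have hbadrfl : bad j = Finset.univ.filter (fun σ : Fin N → Bool =>
              2 * c * T j < |∑ i, if σ i then b j i else -b j i|) := rfl
          rw [hbadrfl]
          have hnne : (n:ℝ) ≠ 0 := by linarith
          have hexp2 : Real.exp (lam ^ 2 * (∑ i, (b j i) ^ 2) / 2 - lam * (2 * c * T j))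
              ≤ Real.exp (-(2 * Real.log (4 * n))) := Real.exp_le_exp.2 hexp
          have hval : Real.exp (-(2 * Real.log (4 * n))) = ((4 * (n:ℝ)) ^ 2)⁻¹ := by
            rw [Real.exp_neg]
            congr 1
            rw [show (2:ℝ) * Real.log (4 * n) = Real.log ((4 * (n:ℝ)) ^ 2) by
              rw [Real.log_pow]; push_cast; ring]
            exact Real.exp_log (by positivity)
          calc ((Finset.univ.filter (fun σ : Fin N → Bool =>
                2 * c * T j < |∑ i, if σ i then b j i else -b j i|)).card : ℝ)
              ≤ 2 * 2 ^ N * Real.exp (lam ^ 2 * (∑ i, (b j i) ^ 2) / 2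
                  - lam * (2 * c * T j)) := hcc
            _ ≤ 2 * 2 ^ N * ((4 * (n:ℝ)) ^ 2)⁻¹ := by
                rw [← hval]
                exact mul_le_mul_of_nonneg_left hexp2 (by positivity)
            _ = 2 ^ N / (8 * (n:ℝ) ^ 2) := by field_simp; ring
      have hsub : (Finset.univ : Finset (Fin N → Bool)) ⊆ Finset.univ.biUnion bad := by
        intro σ _
        obtain ⟨j, hj⟩ := hcon σ
        exact Finset.mem_biUnion.2 ⟨j, Finset.mem_univ j,
          Finset.mem_filter.2 ⟨Finset.mem_univ σ, hj⟩⟩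
      have hcards : (2:ℝ) ^ N ≤ ∑ j, ((bad j).card : ℝ) := by
        have h1 : (Finset.univ : Finset (Fin N → Bool)).card ≤ ∑ j, (bad j).card :=
          le_trans (Finset.card_le_card hsub) (Finset.card_biUnion_le)
        have h2 : (Finset.univ : Finset (Fin N → Bool)).card = 2 ^ N := by
          rw [Finset.card_univ]
          simp [Fintype.card_fun]
        rw [h2] at h1
        calc (2:ℝ) ^ N = ((2 ^ N : ℕ) : ℝ) := by push_cast; ring
          _ ≤ ((∑ j, (bad j).card : ℕ) : ℝ) := by exact_mod_cast h1
          _ = ∑ j, ((bad j).card : ℝ) := by push_cast; rfl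
      rcases Nat.eq_zero_or_pos n with hn | hn
      · subst hn
        simp at hcards
        linarith
      · have hn1 : 1 ≤ (n:ℝ) := by exact_mod_cast hn
        have hsum2 : ∑ j, ((bad j).card : ℝ) ≤ (n:ℝ) * ((2:ℝ) ^ N / (8 * (n:ℝ) ^ 2)) := by
          calc ∑ j, ((bad j).card : ℝ)
              ≤ ∑ _j : Fin n, (2:ℝ) ^ N / (8 * (n:ℝ) ^ 2) :=
                Finset.sum_le_sum (fun j _ => hcard j)
            _ = (n:ℝ) * ((2:ℝ) ^ N / (8 * (n:ℝ) ^ 2)) := by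
                rw [Finset.sum_const, Finset.card_univ, Fintype.card_fin, nsmul_eq_mul]
        have hlt : (n:ℝ) * ((2:ℝ) ^ N / (8 * (n:ℝ) ^ 2)) < 2 ^ N := by
          rw [show (n:ℝ) * ((2:ℝ) ^ N / (8 * (n:ℝ) ^ 2)) = 2 ^ N / (8 * (n:ℝ)) by
            field_simp]
          apply div_lt_self h2N
          linarith
        linarith
    obtain ⟨σ, hσ⟩ := key
    refine ⟨Finset.univ.filter (fun i => σ i = true),
      Finset.univ.filter (fun i => σ i = false), ?_, ?_, ?_⟩
    · ext i
      simp only [Finset.mem_union, Finset.mem_filter, Finset.mem_univ, true_and]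
      cases σ i <;> simp
    · ext i
      simp only [Finset.mem_inter, Finset.mem_filter, Finset.mem_univ, true_and,
        Finset.notMem_empty, iff_false, not_and]
      cases σ i <;> simp
    · have hfilt : Finset.univ.filter (fun i => σ i = false)
          = Finset.univ.filter (fun i => ¬ (σ i = true)) := by
        apply Finset.filter_congr
        intro i _
        simp
      have hsplit : ∀ j, (∑ i ∈ Finset.univ.filter (fun i => σ i = true), b j i)
          + (∑ i ∈ Finset.univ.filter (fun i => σ i = false), b j i) = T j := by
        intro j
        rw [hfilt]
        exact Finset.sum_filter_add_sum_filter_not Finset.univ _ _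
      have hdiff : ∀ j, (∑ i ∈ Finset.univ.filter (fun i => σ i = true), b j i)
          - (∑ i ∈ Finset.univ.filter (fun i => σ i = false), b j i) = S σ j := by
        intro j
        rw [hfilt]
        simp only [hSdef]
        rw [Finset.sum_ite]
        simp only [Finset.sum_neg_distrib]
        ring
      intro Ω hΩ
      have hbound : ∀ j, ∑ i ∈ Ω, b j i ≤ (1 / 2 + c) * T j := by
        intro j
        have h1 := hσ j
        rw [abs_le] at h1
        have h2 := hsplit j
        have h3 := hdiff j
        rcases hΩ with rfl | hΩ2
        · linarith [h1.2]
        · rw [Set.mem_singleton_iff] at hΩ2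
          subst hΩ2
          linarith [h1.1]
      refine norm1q_le A Ω hq (by positivity) ?_
      intro j
      have hTM : T j ≤ M ^ q := by
        have h1 : (T j) ^ (1 / q) ≤ M := by
          have hTrfl : (∑ i, |A i j| ^ q) = T j := rfl
          rw [← hTrfl]
          exact col_le_norm1q A hq j
        calc T j = ((T j) ^ (1 / q)) ^ q := by
              rw [one_div, Real.rpow_inv_rpow (hT0 j) hqne]
          _ ≤ M ^ q := Real.rpow_le_rpow (Real.rpow_nonneg (hT0 j) _) h1 hq0.le
      have hs : ∑ i ∈ Ω, |A i j| ^ q ≤ (1 / 2 + c) * M ^ q := by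
        have hbr : (∑ i ∈ Ω, |A i j| ^ q) = ∑ i ∈ Ω, b j i := rfl
        rw [hbr]
        calc ∑ i ∈ Ω, b j i ≤ (1 / 2 + c) * T j := hbound j
          _ ≤ (1 / 2 + c) * M ^ q := mul_le_mul_of_nonneg_left hTM (by linarith)
      calc (∑ i ∈ Ω, |A i j| ^ q) ^ (1 / q) ≤ ((1 / 2 + c) * M ^ q) ^ (1 / q) := by
            apply Real.rpow_le_rpow _ hs (by positivity)
            apply Finset.sum_nonneg
            intro i _
            positivity
        _ = K * M := by
            rw [Real.mul_rpow (by linarith) (by positivity), hKdef]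
            congr 1
            rw [one_div, Real.rpow_rpow_inv hM0 hqne]
end

section
/- For every natural numbers $N\ge 1$, $n\ge 1$ and every real $M>0$, one can place $N$ pairwise disjoint axis-parallel closed cubes of side length $M$ in $\mathbb{R}^n$ (i.e., there exist points $u_1,\dots,u_N\in\mathbb{R}^n$ with the cubes $u_i+[0,M]^n$ pairwise disjoint) such that every affine hyperplane in $\mathbb{R}^n$ intersects at most $n$ of these cubes. -/
open Polynomial Finset

lemma prod_coeff_bound {ι : Type*} [DecidableEq ι] (c : ι → ℝ) (A : ℝ) (hA : 1 ≤ A) :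
    ∀ (s : Finset ι), (∀ i ∈ s, |c i| ≤ A) →
      ∀ k, |(∏ i ∈ s, (X - C (c i))).coeff k| * A ^ k ≤ (2 * A) ^ s.card := by
  intro s
  induction s using Finset.induction_on with
  | empty =>
      intro _ k
      rcases k with _ | k
      · simp
      · simp [coeff_one]
  | @insert a s ha ih =>
      intro hb k
      have hca : |c a| ≤ A := hb a (mem_insert_self _ _)
      have ih' := ih (fun i hi => hb i (mem_insert_of_mem hi))
      have hA0 : (0:ℝ) < A := lt_of_lt_of_le one_pos hA
      rw [Finset.prod_insert ha, Finset.card_insert_of_notMem ha]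
      set p := ∏ i ∈ s, (X - C (c i)) with hp
      have hexp : (X - C (c a)) * p = X * p - C (c a) * p := by ring
      rcases k with _ | k
      · have h0 : ((X - C (c a)) * p).coeff 0 = - (c a * p.coeff 0) := by
          rw [hexp, coeff_sub, mul_coeff_zero, coeff_X_zero, coeff_C_mul, zero_mul, zero_sub]
        have h1 := ih' 0
        rw [pow_zero, mul_one] at h1 ⊢
        rw [h0, abs_neg, abs_mul]
        have : |c a| * |p.coeff 0| ≤ A * (2*A)^s.card := by
          apply mul_le_mul hca h1 (abs_nonneg _) (le_of_lt hA0)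
        calc |c a| * |p.coeff 0| ≤ A * (2*A)^s.card := this
          _ ≤ (2*A)^(s.card + 1) := by
              rw [pow_succ]
              nlinarith [pow_nonneg (by linarith : (0:ℝ) ≤ 2*A) s.card]
      · have h0 : ((X - C (c a)) * p).coeff (k+1) = p.coeff k - c a * p.coeff (k+1) := by
          rw [hexp, coeff_sub, coeff_X_mul, coeff_C_mul]
        have h1 := ih' k
        have h2 := ih' (k+1)
        rw [h0]
        have habs : |p.coeff k - c a * p.coeff (k+1)| ≤ |p.coeff k| + |c a| * |p.coeff (k+1)| := by
          calc |p.coeff k - c a * p.coeff (k+1)| ≤ |p.coeff k| + |c a * p.coeff (k+1)| :=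
                abs_sub _ _
            _ = |p.coeff k| + |c a| * |p.coeff (k+1)| := by rw [abs_mul]
        have hAk : (0:ℝ) < A ^ (k+1) := pow_pos hA0 _
        calc |p.coeff k - c a * p.coeff (k+1)| * A ^ (k+1)
            ≤ (|p.coeff k| + |c a| * |p.coeff (k+1)|) * A ^ (k+1) := by
              apply mul_le_mul_of_nonneg_right habs (le_of_lt hAk)
          _ = |p.coeff k| * A^k * A + |c a| * (|p.coeff (k+1)| * A^(k+1)) := by ring
          _ ≤ (2*A)^s.card * A + A * (2*A)^s.card := by
              have t1 : |p.coeff k| * A^k * A ≤ (2*A)^s.card * A :=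
                mul_le_mul_of_nonneg_right h1 (le_of_lt hA0)
              have t2 : |c a| * (|p.coeff (k+1)| * A^(k+1)) ≤ A * (2*A)^s.card := by
                apply mul_le_mul hca h2 (by positivity) (le_of_lt hA0)
              linarith
          _ = (2*A)^(s.card+1) := by rw [pow_succ]; ring

/-- For all natural numbers `N ≥ 1`, `n ≥ 1` and every real `M > 0`, one can place `N`
pairwise disjoint axis-parallel closed cubes of side length `M` in `ℝⁿ` (given by their
smallest-coordinate vertices `u₁, …, u_N`, the `i`-th cube being `uᵢ + [0, M]ⁿ`) such that
every affine hyperplane `{x : (a, x) = b}` (with `a ≠ 0`) intersects at most `n` of these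
cubes. -/
theorem statement9 (N n : ℕ) (hN : 1 ≤ N) (hn : 1 ≤ n) (M : ℝ) (hM : 0 < M) :
    ∃ u : Fin N → (Fin n → ℝ),
      (Pairwise fun i i' : Fin N => Disjoint
        {x : Fin n → ℝ | ∀ j, x j ∈ Set.Icc (u i j) (u i j + M)}
        {x : Fin n → ℝ | ∀ j, x j ∈ Set.Icc (u i' j) (u i' j + M)}) ∧
      ∀ (a : Fin n → ℝ) (b : ℝ), a ≠ 0 →
        {i : Fin N | ∃ x : Fin n → ℝ,
          (∀ j, x j ∈ Set.Icc (u i j) (u i j + M)) ∧ (∑ j, a j * x j) = b}.ncard ≤ n := by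
  classical
  set K : ℝ := ((n:ℝ)+1) * n * 2^n * N^n with hK
  have hK0 : (0:ℝ) ≤ K := by positivity
  set T : ℝ := K * M + M + 1 with hTdef
  have hT1 : (1:ℝ) ≤ T := by nlinarith
  have hT0 : (0:ℝ) < T := by linarith
  have hTM : M < T := by nlinarith
  set t : Fin N → ℝ := fun i => (((i:ℕ):ℝ) + 1) * T with ht
  clear_value t
  clear_value T
  clear_value K
  have hsep : ∀ i i' : Fin N, i ≠ i' → T ≤ |t i - t i'| := by
    intro i i' hne
    have h1 : t i - t i' = (((i:ℕ):ℝ) - ((i':ℕ):ℝ)) * T := by rw [ht]; ring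
    have hz : ((i:ℕ):ℤ) ≠ ((i':ℕ):ℤ) := by
      intro h
      exact hne (Fin.ext (by exact_mod_cast h))
    have h2 : (1:ℤ) ≤ |((i:ℕ):ℤ) - ((i':ℕ):ℤ)| := Int.one_le_abs (sub_ne_zero.mpr hz)
    have h2' : (1:ℝ) ≤ |((i:ℕ):ℝ) - ((i':ℕ):ℝ)| := by
      rw [show ((i:ℕ):ℝ) - ((i':ℕ):ℝ) = ((((i:ℕ):ℤ) - ((i':ℕ):ℤ) : ℤ) : ℝ) by push_cast; ring,
        ← Int.cast_abs]
      exact_mod_cast h2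
    rw [h1, abs_mul, abs_of_pos hT0]
    nlinarith
  have hdisj : Pairwise fun i i' : Fin N => Disjoint
      {x : Fin n → ℝ | ∀ j : Fin n, x j ∈ Set.Icc (t i ^ (j.val+1)) (t i ^ (j.val+1) + M)}
      {x : Fin n → ℝ | ∀ j : Fin n, x j ∈ Set.Icc (t i' ^ (j.val+1)) (t i' ^ (j.val+1) + M)} := by
    intro i i' hne
    rw [Set.disjoint_left]
    intro x hx hx'
    set j0 : Fin n := ⟨0, hn⟩ with hj0
    have h1 : x j0 ∈ Set.Icc (t i ^ (j0.val+1)) (t i ^ (j0.val+1) + M) := hx j0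
    have h2 : x j0 ∈ Set.Icc (t i' ^ (j0.val+1)) (t i' ^ (j0.val+1) + M) := hx' j0
    have hv : j0.val = 0 := rfl
    rw [hv, pow_one] at h1 h2
    have habs : |t i - t i'| ≤ M := by
      rw [abs_sub_le_iff]
      exact ⟨by linarith [h1.1, h2.2], by linarith [h1.2, h2.1]⟩
    have := hsep i i' hne
    linarith
  have hyper : ∀ (a : Fin n → ℝ) (b : ℝ), a ≠ 0 →
      {i : Fin N | ∃ x : Fin n → ℝ,
        (∀ j : Fin n, x j ∈ Set.Icc (t i ^ (j.val+1)) (t i ^ (j.val+1) + M)) ∧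
        (∑ j, a j * x j) = b}.ncard ≤ n := by
    intro a b ha
    by_contra hcard
    push_neg at hcard
    set F : Set (Fin N) := {i : Fin N | ∃ x : Fin n → ℝ,
        (∀ j : Fin n, x j ∈ Set.Icc (t i ^ (j.val+1)) (t i ^ (j.val+1) + M)) ∧
        (∑ j, a j * x j) = b} with hF
    have hcard' : n + 1 ≤ F.toFinset.card := by
      rw [← Set.ncard_eq_toFinset_card']
      omega
    obtain ⟨S, hSsub, hScard⟩ := Finset.exists_subset_card_eq hcard'
    have hSF : ∀ i ∈ S, i ∈ F := fun i hi => Set.mem_toFinset.mp (hSsub hi)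
    have hane : ∃ j, a j ≠ 0 := by
      by_contra h
      push_neg at h
      exact ha (funext h)
    have hsum_pos : 0 < ∑ j, |a j| := by
      obtain ⟨j, hj⟩ := hane
      exact Finset.sum_pos' (fun i _ => abs_nonneg _) ⟨j, Finset.mem_univ j, abs_pos.mpr hj⟩
    set ε : ℝ := M * ∑ j, |a j| with hε
    clear_value ε
    have hε0 : 0 ≤ ε := by
      rw [hε]
      exact mul_nonneg hM.le (Finset.sum_nonneg fun j _ => abs_nonneg _)
    set P : Polynomial ℝ := (∑ j : Fin n, C (a j) * X ^ (j.val+1)) - C b with hPdef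
    clear_value P
    have hPcoeff : ∀ m : ℕ, 1 ≤ m →
        P.coeff m = ∑ j : Fin n, (if m = j.val+1 then a j else 0) := by
      intro m hm
      rw [hPdef, Polynomial.coeff_sub, Polynomial.finset_sum_coeff, Polynomial.coeff_C,
        if_neg (by omega), sub_zero]
      refine Finset.sum_congr rfl fun j _ => ?_
      rw [Polynomial.coeff_C_mul, Polynomial.coeff_X_pow]
      split_ifs <;> simp
    have hPfin : ∀ j : Fin n, P.coeff (j.val+1) = a j := by
      intro j
      rw [hPcoeff _ (by omega)]
      rw [Finset.sum_eq_single j (fun j' _ hne => if_neg (by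
        intro h
        exact hne (Fin.ext (by omega)))) (fun h => absurd (Finset.mem_univ j) h)]
      rw [if_pos rfl]
    have hPhi : ∀ m : ℕ, n+1 ≤ m → P.coeff m = 0 := by
      intro m hm
      rw [hPcoeff _ (by omega)]
      refine Finset.sum_eq_zero fun j _ => if_neg ?_
      have := j.isLt
      omega
    have hPdeg : P.degree < (S.card : ℕ) := by
      rw [hScard, Polynomial.degree_lt_iff_coeff_zero]
      intro m hm
      exact hPhi m hm
    have htinj : Set.InjOn t ↑S := by
      intro i _ i' _ h
      by_contra hne
      have hs := hsep i i' hne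
      rw [h, sub_self, abs_zero] at hs
      linarith
    have heval : ∀ i ∈ S, |P.eval (t i)| ≤ ε := by
      intro i hi
      obtain ⟨x, hx, hxb⟩ := hSF i hi
      have he : P.eval (t i) = ∑ j : Fin n, a j * (t i ^ (j.val+1) - x j) := by
        rw [hPdef, Polynomial.eval_sub, Polynomial.eval_finset_sum, Polynomial.eval_C, ← hxb,
          ← Finset.sum_sub_distrib]
        refine Finset.sum_congr rfl fun j _ => ?_
        simp [mul_sub]
      rw [he]
      calc |∑ j : Fin n, a j * (t i ^ (j.val+1) - x j)|
          ≤ ∑ j : Fin n, |a j * (t i ^ (j.val+1) - x j)| := Finset.abs_sum_le_sum_abs _ _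
        _ ≤ ∑ j : Fin n, |a j| * M := by
            refine Finset.sum_le_sum fun j _ => ?_
            rw [abs_mul]
            refine mul_le_mul_of_nonneg_left ?_ (abs_nonneg _)
            have h1 := (hx j).1
            have h2 := (hx j).2
            rw [abs_le]
            exact ⟨by linarith, by linarith⟩
        _ = ε := by rw [hε, ← Finset.sum_mul]; ring
    set A : ℝ := (N:ℝ) * T with hA
    clear_value A
    have hN1 : (1:ℝ) ≤ (N:ℝ) := by exact_mod_cast hN
    have hA1 : (1:ℝ) ≤ A := by nlinarith
    have hA0 : (0:ℝ) < A := by linarith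
    have htA : ∀ i : Fin N, |t i| ≤ A := by
      intro i
      rw [ht]
      simp only
      rw [abs_of_pos (mul_pos (by positivity) hT0)]
      have hi : ((i:ℕ):ℝ) + 1 ≤ (N:ℝ) := by
        have := i.isLt
        exact_mod_cast this
      rw [hA]
      nlinarith
    have herase : ∀ i ∈ S, (S.erase i).card = n := by
      intro i hi
      rw [Finset.card_erase_of_mem hi, hScard]
      omega
    have hbasisb : ∀ i ∈ S, ∀ k : ℕ, 1 ≤ k →
        |(Lagrange.basis S t i).coeff k| ≤ 2^n * (N:ℝ)^n / T := by
      intro i hi k hk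
      have hb : Lagrange.basis S t i
          = C (∏ m ∈ S.erase i, (t i - t m)⁻¹) * ∏ m ∈ S.erase i, (X - C (t m)) := by
        unfold Lagrange.basis Lagrange.basisDivisor
        rw [Finset.prod_mul_distrib, map_prod]
      rw [hb, Polynomial.coeff_C_mul, abs_mul]
      have h1 : |∏ m ∈ S.erase i, (t i - t m)⁻¹| ≤ (T⁻¹)^n := by
        rw [Finset.abs_prod]
        calc ∏ m ∈ S.erase i, |(t i - t m)⁻¹| ≤ ∏ m ∈ S.erase i, T⁻¹ := by
              refine Finset.prod_le_prod (fun m _ => abs_nonneg _) fun m hm => ?_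
              rw [abs_inv]
              have hmne : m ≠ i := (Finset.mem_erase.mp hm).1
              have hsp := hsep i m (fun h => hmne h.symm)
              exact inv_anti₀ hT0 hsp
          _ = (T⁻¹)^(S.erase i).card := Finset.prod_const _
          _ = (T⁻¹)^n := by rw [herase i hi]
      have h2 : |(∏ m ∈ S.erase i, (X - C (t m))).coeff k| * A ≤ (2*A)^n := by
        have hkey := prod_coeff_bound t A hA1 (S.erase i) (fun m _ => htA m) k
        rw [herase i hi] at hkey
        have hAk : A ≤ A^k := le_self_pow₀ hA1 (by omega)
        calc |(∏ m ∈ S.erase i, (X - C (t m))).coeff k| * A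
            ≤ |(∏ m ∈ S.erase i, (X - C (t m))).coeff k| * A^k :=
              mul_le_mul_of_nonneg_left hAk (abs_nonneg _)
          _ ≤ (2*A)^n := hkey
      have h2' : |(∏ m ∈ S.erase i, (X - C (t m))).coeff k| ≤ (2*A)^n / A :=
        (le_div_iff₀ hA0).mpr h2
      calc |∏ m ∈ S.erase i, (t i - t m)⁻¹| * |(∏ m ∈ S.erase i, (X - C (t m))).coeff k|
          ≤ (T⁻¹)^n * ((2*A)^n / A) :=
            mul_le_mul h1 h2' (abs_nonneg _) (pow_nonneg (inv_nonneg.mpr hT0.le) n)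
        _ = 2^n * (N:ℝ)^n / (↑N * T) := by
            have hTn : (T⁻¹)^n * T^n = 1 := by
              rw [← mul_pow, inv_mul_cancel₀ (ne_of_gt hT0), one_pow]
            have h2A : (2*A)^n = 2^n * ((N:ℝ)^n * T^n) := by
              rw [hA, mul_pow, mul_pow]
            rw [h2A, hA, div_eq_mul_inv, div_eq_mul_inv]
            calc (T⁻¹)^n * (2^n * ((N:ℝ)^n * T^n) * ((N:ℝ)*T)⁻¹)
                = ((T⁻¹)^n * T^n) * (2^n * (N:ℝ)^n * ((N:ℝ)*T)⁻¹) := by ring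
              _ = 2^n * (N:ℝ)^n * ((N:ℝ)*T)⁻¹ := by rw [hTn, one_mul]
              _ = 2^n * (N:ℝ)^n * ((N:ℝ)*T)⁻¹ := rfl
        _ ≤ 2^n * (N:ℝ)^n / T := by
            have hNpos : (0:ℝ) < (N:ℝ) := lt_of_lt_of_le one_pos hN1
            rw [div_le_div_iff₀ (mul_pos hNpos hT0) hT0]
            have hp : (0:ℝ) < 2^n * (N:ℝ)^n * T :=
              mul_pos (mul_pos (pow_pos two_pos n) (pow_pos hNpos n)) hT0
            nlinarith [hp]
    have hPeq := Lagrange.eq_interpolate htinj hPdeg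
    have hcform : ∀ m : ℕ,
        P.coeff m = ∑ i ∈ S, P.eval (t i) * (Lagrange.basis S t i).coeff m := by
      intro m
      conv_lhs => rw [hPeq]
      rw [Lagrange.interpolate_apply, Polynomial.finset_sum_coeff]
      exact Finset.sum_congr rfl fun i _ => Polynomial.coeff_C_mul _
    have habound : ∀ j : Fin n, |a j| ≤ ((n:ℝ)+1) * (ε * (2^n * (N:ℝ)^n / T)) := by
      intro j
      rw [← hPfin j, hcform]
      calc |∑ i ∈ S, P.eval (t i) * (Lagrange.basis S t i).coeff (j.val+1)|
          ≤ ∑ i ∈ S, |P.eval (t i) * (Lagrange.basis S t i).coeff (j.val+1)| :=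
            Finset.abs_sum_le_sum_abs _ _
        _ ≤ ∑ _i ∈ S, ε * (2^n * (N:ℝ)^n / T) := by
            refine Finset.sum_le_sum fun i hi => ?_
            rw [abs_mul]
            exact mul_le_mul (heval i hi) (hbasisb i hi _ (by omega)) (abs_nonneg _) hε0
        _ = ((n:ℝ)+1) * (ε * (2^n * (N:ℝ)^n / T)) := by
            rw [Finset.sum_const, hScard, nsmul_eq_mul]
            push_cast
            ring
    have hsum_le : ∑ j, |a j| ≤ (n:ℝ) * (((n:ℝ)+1) * (ε * (2^n * (N:ℝ)^n / T))) := by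
      calc ∑ j : Fin n, |a j| ≤ ∑ _j : Fin n, ((n:ℝ)+1) * (ε * (2^n * (N:ℝ)^n / T)) :=
            Finset.sum_le_sum fun j _ => habound j
        _ = (n:ℝ) * (((n:ℝ)+1) * (ε * (2^n * (N:ℝ)^n / T))) := by
            rw [Finset.sum_const, Finset.card_univ, Fintype.card_fin, nsmul_eq_mul]
    have hKe : (n:ℝ) * (((n:ℝ)+1) * (ε * (2^n * (N:ℝ)^n / T))) = K * M * (∑ j, |a j|) / T := by
      rw [hK, hε]
      simp only [div_eq_mul_inv]
      ring
    rw [hKe] at hsum_le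
    have hlt : K * M * (∑ j, |a j|) / T < ∑ j, |a j| := by
      rw [div_lt_iff₀ hT0]
      have hexp : T = K * M + M + 1 := hTdef
      nlinarith [mul_pos hsum_pos (show (0:ℝ) < M + 1 by linarith)]
    linarith

  exact ⟨fun i j => t i ^ (j.val+1), hdisj, hyper⟩
end
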